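/- arXiv:0907.0116 — 2 statements merged into one kernel-verified Lean document; each statement's English description precedes it below -/
import Mathlib

section
/- Let f_a(z) = λ·a·(e^{z/a}(z+1-a) - 1 + a) with a ∈ ℂ*, and let v_a = λ·a·(a-1). Then the equation f_a(z) = v_a has exactly one solution in ℂ, namely z = a - 1. -/
open Complex

theorem sub_asymptotic_value_eq (a lam z : ℂ) :
    lam * a * (exp (z / a) * (z + 1 - a) - 1 + a) - lam * a * (a - 1)
      = lam * a * exp (z / a) * (z - (a - 1)) := by
  ring

/-- The asymptotic value `v_a = λ·a·(a-1)` of `f_a` has exactly one finite preimage,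
namely `z = a - 1`. -/
theorem asymptotic_value_unique_preimage (a lam : ℂ) (ha : a ≠ 0) (hlam : lam ≠ 0) :
    {z : ℂ | lam * a * (Complex.exp (z / a) * (z + 1 - a) - 1 + a) = lam * a * (a - 1)}
      = {a - 1} := by
  ext z
  rw [Set.mem_ofPred_eq, Set.mem_singleton_iff, ← sub_eq_zero, sub_asymptotic_value_eq]
  simp only [mul_eq_zero, hlam, ha, exp_ne_zero, sub_eq_zero, false_or]
end

section
/- Let f : ℂ → ℂ be entire with f(0) = 0, and suppose f is injective on the open disc D(0, R') for some R' > 0. Suppose f depends on a parameter a holomorphically and continuously in a, with f = f_{a₀}. Then there exist R > 0 and ε > 0 such that for all a with |a - a₀| < ε, f_a is injective on D(0, R). (Hurwitz-type stability of univalence under perturbation.) -/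
/-!
A holomorphic function that is injective near a point has nonvanishing derivative there:
otherwise `f - f x = h ^ n` near `x` for some `n ≥ 2` and some `h` with `h x = 0`, `h' x ≠ 0`;
since `h` maps neighbourhoods of `x` onto neighbourhoods of `0`, the points `w` and `ζ w`
(`ζ` a primitive `n`-th root of unity) have distinct preimages with the same value of `f`.

So `c = ∂_z F (a₀, 0) ≠ 0`. By continuity of the partial derivative, `‖∂_z F (a, z) - c‖ ≤ ‖c‖ / 2`
for `(a, z)` near `(a₀, 0)`, and the mean value inequality for `z ↦ F a z - c z` then shows that
`F a` is injective on a small disc.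
-/

open Metric Filter Topology Set

theorem Complex.not_injOn_pow_of_mem_nhds_zero {n : ℕ} (hn : 2 ≤ n) {s : Set ℂ}
    (hs : s ∈ 𝓝 0) : ¬ InjOn (· ^ n) s := by
  intro hinj
  have hζ := Complex.isPrimitiveRoot_exp n (by omega)
  set ζ := Complex.exp (2 * Real.pi * Complex.I / n)
  have hζs : ∀ᶠ w in 𝓝 (0 : ℂ), ζ * w ∈ s :=
    (continuous_const_mul ζ).continuousAt.preimage_mem_nhds (by simpa using hs)
  obtain ⟨w, ⟨hws, hζws⟩, hw⟩ : ∃ w, (w ∈ s ∧ ζ * w ∈ s) ∧ w ≠ 0 :=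
    (((Filter.eventually_mem_set.mpr hs).and hζs).filter_mono nhdsWithin_le_nhds |>.and
      (self_mem_nhdsWithin : {0}ᶜ ∈ 𝓝[≠] (0 : ℂ))).exists
  have : ζ * w = 1 * w := by
    rw [one_mul]
    exact hinj hζws hws (by simp [mul_pow, hζ.pow_eq_one])
  exact hζ.ne_one (by omega) (mul_right_cancel₀ hw this)

open Metric Filter Topology Set

theorem AnalyticAt.exists_pow_eq_of_ne_zero {u : ℂ → ℂ} {x : ℂ} (hu : AnalyticAt ℂ u x)
    (hux : u x ≠ 0) {n : ℕ} (hn : n ≠ 0) : ∃ v : ℂ → ℂ, AnalyticAt ℂ v x ∧ ∀ z, v z ^ n = u z := by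
  -- dividing by `u x` keeps the base near `1`, inside the slit plane where `cpow` is analytic
  refine ⟨fun z => u x ^ (n⁻¹ : ℂ) * (u z / u x) ^ (n⁻¹ : ℂ), ?_, fun z => ?_⟩
  · refine analyticAt_const.mul ((hu.div analyticAt_const hux).cpow analyticAt_const ?_)
    simp [div_self hux, Complex.one_mem_slitPlane]
  · rw [mul_pow, Complex.cpow_nat_inv_pow _ hn, Complex.cpow_nat_inv_pow _ hn,
      mul_div_cancel₀ _ hux]

theorem HasStrictDerivAt.not_injOn_of_eventuallyEq_pow {f h : ℂ → ℂ} {h' x : ℂ} {n : ℕ}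
    {s : Set ℂ} (hh : HasStrictDerivAt h h' x) (hh' : h' ≠ 0) (hx : h x = 0)
    (hf : f =ᶠ[𝓝 x] fun z => h z ^ n) (hn : 2 ≤ n) (hs : s ∈ 𝓝 x) : ¬ InjOn f s := by
  intro hinj
  set t := s ∩ {z | f z = h z ^ n}
  have ht : t ∈ 𝓝 x := inter_mem hs hf
  have hht : h '' t ∈ 𝓝 0 := by
    rw [← hx, ← hh.map_nhds_eq hh']
    exact image_mem_map ht
  refine Complex.not_injOn_pow_of_mem_nhds_zero hn hht (InjOn.image_of_comp ?_)
  exact (hinj.mono inter_subset_left).congr fun z hz => hz.2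

theorem AnalyticAt.deriv_ne_zero_of_injOn {f : ℂ → ℂ} {x : ℂ} {s : Set ℂ}
    (hf : AnalyticAt ℂ f x) (hinj : InjOn f s) (hs : s ∈ 𝓝 x) : deriv f x ≠ 0 := by
  intro hd
  set g := (f · - f x)
  have hg : AnalyticAt ℂ g x := hf.sub analyticAt_const
  have hginj : InjOn g s := fun a ha b hb hab => hinj ha hb (sub_left_inj.mp hab)
  have horder : analyticOrderAt g x ≠ ⊤ := by
    rw [Ne, analyticOrderAt_eq_top]
    intro hzero
    obtain ⟨z, ⟨hzs, hz0⟩, hzx⟩ : ∃ z, (z ∈ s ∧ g z = 0) ∧ z ≠ x :=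
      (((eventually_mem_set.mpr hs).and hzero).filter_mono nhdsWithin_le_nhds |>.and
        (self_mem_nhdsWithin : {x}ᶜ ∈ 𝓝[≠] x)).exists
    exact hzx (hginj hzs (mem_of_mem_nhds hs) (by simp [hz0, g]))
  have htwo : 2 ≤ analyticOrderAt g x := by
    rw [← hf.analyticOrderAt_deriv_add_one]
    have hderiv : 1 ≤ analyticOrderAt (deriv f) x :=
      Order.one_le_iff_ne_zero.mpr (hf.deriv.analyticOrderAt_ne_zero.mpr hd)
    calc (2 : ℕ∞) = 1 + 1 := one_add_one_eq_two.symm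
      _ ≤ _ := add_le_add_left hderiv 1
  obtain ⟨n, hn⟩ := ENat.ne_top_iff_exists.mp horder
  obtain ⟨u, hu, hux, hgu⟩ := hg.analyticOrderAt_eq_natCast.mp hn.symm
  have hn2 : 2 ≤ n := by rw [← hn] at htwo; exact_mod_cast htwo
  obtain ⟨v, hv, hvu⟩ := hu.exists_pow_eq_of_ne_zero hux (n := n) (by omega)
  have hvx : v x ≠ 0 := fun h => hux (by rw [← hvu, h, zero_pow (by omega)])
  have hh : HasStrictDerivAt (fun z => (z - x) * v z) (v x) x := by
    simpa using
      HasStrictDerivAt.fun_mul ((hasStrictDerivAt_id x).sub_const x) hv.hasStrictDerivAt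
  refine hh.not_injOn_of_eventuallyEq_pow hvx (by simp) ?_ hn2 hs hginj
  filter_upwards [hgu] with z hz
  rw [hz, smul_eq_mul, mul_pow, hvu]

theorem Convex.injOn_of_norm_hasDerivWithinAt_sub_le {𝕜 G : Type*} [RCLike 𝕜]
    [NormedAddCommGroup G] [NormedSpace 𝕜 G] {f f' : 𝕜 → G} {s : Set 𝕜} {c : G} {C : ℝ}
    (hs : Convex ℝ s) (hf : ∀ z ∈ s, HasDerivWithinAt f (f' z) s z)
    (hf' : ∀ z ∈ s, ‖f' z - c‖ ≤ C) (hC : C < ‖c‖) : InjOn f s := by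
  intro x hx y hy hxy
  have hg : ∀ z ∈ s, HasDerivWithinAt (fun z => f z - z • c) (f' z - c) s z := fun z hz => by
    simpa using (hf z hz).fun_sub ((hasDerivWithinAt_id z s).smul_const c)
  have hmvt := hs.norm_image_sub_le_of_norm_hasDerivWithin_le hg hf' hx hy
  have hdiff : (f y - y • c) - (f x - x • c) = -((y - x) • c) := by
    rw [hxy, sub_smul]; abel
  rw [hdiff, norm_neg, norm_smul] at hmvt
  by_contra hne
  have : 0 < ‖y - x‖ := norm_pos_iff.mpr (sub_ne_zero.mpr (Ne.symm hne))
  nlinarith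

theorem exists_injOn_ball_of_contDiff_of_deriv_ne_zero {𝕜 E G : Type*} [RCLike 𝕜]
    [NormedAddCommGroup E] [NormedSpace 𝕜 E] [NormedAddCommGroup G] [NormedSpace 𝕜 G]
    {F : E → 𝕜 → G} (hF : ContDiff 𝕜 1 fun p : E × 𝕜 => F p.1 p.2) {a₀ : E} {z₀ : 𝕜}
    (hd : deriv (F a₀) z₀ ≠ 0) : ∃ R > 0, ∀ᶠ a in 𝓝 a₀, InjOn (F a) (ball z₀ R) := by
  set φ : E × 𝕜 → G := fun p => fderiv 𝕜 (fun p : E × 𝕜 => F p.1 p.2) p (0, 1)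
  have hder : ∀ a z, HasDerivAt (F a) (φ (a, z)) z := fun a z =>
    (hF.differentiable one_ne_zero (a, z)).hasFDerivAt.comp_hasDerivAt z
      ((hasDerivAt_const z a).prodMk (hasDerivAt_id z))
  have hφ : Continuous φ := (hF.continuous_fderiv one_ne_zero).clm_apply continuous_const
  set c := φ (a₀, z₀)
  have hc : 0 < ‖c‖ := norm_pos_iff.mpr ((hder a₀ z₀).deriv.symm.trans_ne hd)
  have hnear : ∀ᶠ p in 𝓝 (a₀, z₀), ‖φ p - c‖ ≤ ‖c‖ / 2 := by
    simpa only [mem_closedBall, dist_eq_norm] using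
      (hφ.tendsto (a₀, z₀)).eventually (closedBall_mem_nhds c (half_pos hc))
  rw [nhds_prod_eq, eventually_prod_iff] at hnear
  obtain ⟨pa, hpa, pz, hpz, hp⟩ := hnear
  obtain ⟨R, hR, hRz⟩ := Metric.eventually_nhds_iff_ball.mp hpz
  refine ⟨R, hR, hpa.mono fun a ha => ?_⟩
  exact (convex_ball z₀ R).injOn_of_norm_hasDerivWithinAt_sub_le
    (fun z _ => (hder a z).hasDerivWithinAt) (fun z hz => hp ha (hRz z hz)) (half_lt_self hc)

theorem univalence_stability_general (F : ℂ → ℂ → ℂ)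
    (hF : AnalyticOn ℂ (fun p : ℂ × ℂ => F p.1 p.2) Set.univ)
    (a₀ : ℂ) (R' : ℝ) (hR' : 0 < R')
    (hinj : Set.InjOn (F a₀) (ball 0 R')) :
    ∃ R > (0 : ℝ), ∃ ε > (0 : ℝ), ∀ a : ℂ, ‖a - a₀‖ < ε →
      Set.InjOn (F a) (ball 0 R) := by
  have hslice : AnalyticAt ℂ (F a₀) 0 :=
    (analyticWithinAt_univ.mp (hF (a₀, 0) (mem_univ _))).comp
      (analyticAt_const.prod analyticAt_id)
  obtain ⟨R, hR, hev⟩ := exists_injOn_ball_of_contDiff_of_deriv_ne_zero hF.contDiff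
    (hslice.deriv_ne_zero_of_injOn hinj (ball_mem_nhds 0 hR'))
  obtain ⟨ε, hε, hball⟩ := Metric.eventually_nhds_iff.mp hev
  exact ⟨R, hR, ε, hε, fun a ha => hball (by rwa [dist_eq_norm])⟩

/-- Stability of univalence under perturbation: if `(a, z) ↦ F a z` is entire in both
variables, `F a 0 = 0` for all `a`, and `F a₀` is injective on `D(0, R')`, then there are
`R > 0` and `ε > 0` such that `F a` is injective on `D(0, R)` for all `|a - a₀| < ε`. -/
theorem univalence_stability (F : ℂ → ℂ → ℂ)
    (hF : AnalyticOn ℂ (fun p : ℂ × ℂ => F p.1 p.2) Set.univ)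
    (hF0 : ∀ a, F a 0 = 0) (a₀ : ℂ) (R' : ℝ) (hR' : 0 < R')
    (hinj : Set.InjOn (F a₀) (ball 0 R')) :
    ∃ R > (0 : ℝ), ∃ ε > (0 : ℝ), ∀ a : ℂ, ‖a - a₀‖ < ε →
      Set.InjOn (F a) (ball 0 R) :=
  univalence_stability_general F hF a₀ R' hR' hinj
end
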